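/- arXiv:2601.04652 — 2 statements merged into one kernel-verified Lean document; each statement's English description precedes it below -/
import Mathlib

section
/- Let R11 be a symmetric invertible real m×m matrix, R22 a symmetric invertible real k×k matrix, and R12 a real m×k matrix such that both Schur complements R11 − R12·R22⁻¹·R12ᵀ and R22 − R12ᵀ·R11⁻¹·R12 are invertible. Then for any real m×n matrix S1 and real k×n matrix S2, (S1 − R12·R22⁻¹·S2)ᵀ·(R11 − R12·R22⁻¹·R12ᵀ)⁻¹·R12·R22⁻¹ − S2ᵀ·R22⁻¹ = −(S2 − R12ᵀ·R11⁻¹·S1)ᵀ·(R22 − R12ᵀ·R11⁻¹·R12)⁻¹. -/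
open Matrix

/-- Proposition 4.1 of the paper (coefficient identity showing the two BODEs coincide):
for symmetric invertible `R11`, `R22` with both Schur complements invertible,
`(S1 - R12 R22⁻¹ S2)ᵀ (R11 - R12 R22⁻¹ R12ᵀ)⁻¹ R12 R22⁻¹ - S2ᵀ R22⁻¹
  = -(S2 - R12ᵀ R11⁻¹ S1)ᵀ (R22 - R12ᵀ R11⁻¹ R12)⁻¹`. -/
theorem bode_coefficient_identity
    {m k n : ℕ}
    (R11 : Matrix (Fin m) (Fin m) ℝ) (hR11sym : R11ᵀ = R11) (h11 : IsUnit R11)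
    (R22 : Matrix (Fin k) (Fin k) ℝ) (hR22sym : R22ᵀ = R22) (h22 : IsUnit R22)
    (R12 : Matrix (Fin m) (Fin k) ℝ)
    (hSchur1 : IsUnit (R11 - R12 * R22⁻¹ * R12ᵀ))
    (hSchur2 : IsUnit (R22 - R12ᵀ * R11⁻¹ * R12))
    (S1 : Matrix (Fin m) (Fin n) ℝ) (S2 : Matrix (Fin k) (Fin n) ℝ) :
    (S1 - R12 * R22⁻¹ * S2)ᵀ * (R11 - R12 * R22⁻¹ * R12ᵀ)⁻¹ * R12 * R22⁻¹ -
        S2ᵀ * R22⁻¹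
      = -((S2 - R12ᵀ * R11⁻¹ * S1)ᵀ * (R22 - R12ᵀ * R11⁻¹ * R12)⁻¹) := by
  set A := R11 - R12 * R22⁻¹ * R12ᵀ with hAdef
  set B := R22 - R12ᵀ * R11⁻¹ * R12 with hBdef
  have d11 : IsUnit R11.det := (isUnit_iff_isUnit_det R11).mp h11
  have d22 : IsUnit R22.det := (isUnit_iff_isUnit_det R22).mp h22
  have dA : IsUnit A.det := (isUnit_iff_isUnit_det A).mp hSchur1
  have dB : IsUnit B.det := (isUnit_iff_isUnit_det B).mp hSchur2
  have h11' : R11⁻¹ * R11 = 1 := nonsing_inv_mul R11 d11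
  have h11r : R11 * R11⁻¹ = 1 := mul_nonsing_inv R11 d11
  have h22' : R22⁻¹ * R22 = 1 := nonsing_inv_mul R22 d22
  have h22r : R22 * R22⁻¹ = 1 := mul_nonsing_inv R22 d22
  have hA' : A⁻¹ * A = 1 := nonsing_inv_mul A dA
  have hAr : A * A⁻¹ = 1 := mul_nonsing_inv A dA
  have hB' : B⁻¹ * B = 1 := nonsing_inv_mul B dB
  have hBr : B * B⁻¹ = 1 := mul_nonsing_inv B dB
  have hinv22sym : (R22⁻¹)ᵀ = R22⁻¹ := by
    rw [transpose_nonsing_inv, hR22sym]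
  have hinv11sym : (R11⁻¹)ᵀ = R11⁻¹ := by
    rw [transpose_nonsing_inv, hR11sym]
  -- cancellation helpers
  have c11r : ∀ (M : Matrix (Fin m) (Fin k) ℝ), R11 * (R11⁻¹ * M) = M := fun M => by
    rw [← Matrix.mul_assoc, h11r, Matrix.one_mul]
  have c22r : ∀ (M : Matrix (Fin k) (Fin m) ℝ), R22 * (R22⁻¹ * M) = M := fun M => by
    rw [← Matrix.mul_assoc, h22r, Matrix.one_mul]
  have cA : ∀ (M : Matrix (Fin m) (Fin k) ℝ), A⁻¹ * (A * M) = M := fun M => by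
    rw [← Matrix.mul_assoc, hA', Matrix.one_mul]
  have cAr : ∀ (M : Matrix (Fin m) (Fin k) ℝ), A * (A⁻¹ * M) = M := fun M => by
    rw [← Matrix.mul_assoc, hAr, Matrix.one_mul]
  -- key identity 1 : A⁻¹ R12 R22⁻¹ = R11⁻¹ R12 B⁻¹ (right-assoc form)
  have keyAB : A * (R11⁻¹ * R12) = R12 * (R22⁻¹ * B) := by
    rw [hAdef, hBdef]
    simp only [Matrix.sub_mul, Matrix.mul_sub, Matrix.mul_assoc, c11r, h22', Matrix.mul_one]
  have key1' : R11⁻¹ * (R12 * B⁻¹) = A⁻¹ * (R12 * R22⁻¹) := by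
    calc R11⁻¹ * (R12 * B⁻¹) = A⁻¹ * (A * (R11⁻¹ * R12)) * B⁻¹ := by
          rw [cA, Matrix.mul_assoc]
      _ = A⁻¹ * (R12 * (R22⁻¹ * B)) * B⁻¹ := by rw [keyAB]
      _ = A⁻¹ * (R12 * R22⁻¹) := by
          simp only [Matrix.mul_assoc, hBr, Matrix.mul_one]
  -- key identity 2 : B⁻¹ = R22⁻¹ + R22⁻¹ R12ᵀ A⁻¹ R12 R22⁻¹
  have keyC : B * (R22⁻¹ * R12ᵀ) = R12ᵀ * (R11⁻¹ * A) := by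
    rw [hAdef, hBdef]
    simp only [Matrix.sub_mul, Matrix.mul_sub, Matrix.mul_assoc, c22r, h11', Matrix.mul_one]
  have key2 : B⁻¹ = R22⁻¹ + R22⁻¹ * (R12ᵀ * (A⁻¹ * (R12 * R22⁻¹))) := by
    refine inv_eq_right_inv ?_
    rw [Matrix.mul_add]
    have e1 : B * (R22⁻¹ * (R12ᵀ * (A⁻¹ * (R12 * R22⁻¹))))
        = R12ᵀ * (R11⁻¹ * (R12 * R22⁻¹)) := by
      calc B * (R22⁻¹ * (R12ᵀ * (A⁻¹ * (R12 * R22⁻¹))))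
          = B * (R22⁻¹ * R12ᵀ) * (A⁻¹ * (R12 * R22⁻¹)) := by
            simp only [Matrix.mul_assoc]
        _ = R12ᵀ * (R11⁻¹ * A) * (A⁻¹ * (R12 * R22⁻¹)) := by rw [keyC]
        _ = R12ᵀ * (R11⁻¹ * (R12 * R22⁻¹)) := by
            simp only [Matrix.mul_assoc, cAr]
    rw [e1, hBdef, Matrix.sub_mul, h22r]
    simp only [Matrix.mul_assoc]
    abel
  -- finish
  simp only [transpose_sub, transpose_mul, transpose_transpose, hinv11sym, hinv22sym,
    Matrix.sub_mul, Matrix.mul_assoc, neg_sub]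
  rw [key1', key2]
  simp only [Matrix.mul_add, Matrix.add_mul, Matrix.mul_assoc]
  abel
end

section
/- Let R11 be a symmetric positive definite real m×m matrix, R22 a symmetric negative definite real k×k matrix, R12 a real m×k matrix, S1 a real m×n matrix, S2 a real k×n matrix, x ∈ ℝⁿ, a ∈ ℝᵐ, b ∈ ℝᵏ. Define q(u, v) := ⟨R11 u, u⟩ + ⟨R22 v, v⟩ + 2⟨R12 v, u⟩ + 2⟨S1 x + a, u⟩ + 2⟨S2 x + b, v⟩, let Σ := R11 − R12·R22⁻¹·R12ᵀ, u* := −Σ⁻¹·((S1 − R12·R22⁻¹·S2) x + a − R12·R22⁻¹·b), v* := −R22⁻¹·(R12ᵀ u* + S2 x + b), let w ∈ ℝ^{m+k} be the stacked vector (S1 x + a; S2 x + b), and R the block matrix [[R11, R12],[R12ᵀ, R22]]. Then (u*, v*) is a saddle point of q: for all u ∈ ℝᵐ and v ∈ ℝᵏ, q(u*, v) ≤ q(u*, v*) ≤ q(u, v*), and the saddle value is q(u*, v*) = −⟨R⁻¹ w, w⟩. -/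
open Matrix

lemma adj_dot {p r : Type*} [Fintype p] [Fintype r] (A : Matrix p r ℝ) (u : p → ℝ) (v : r → ℝ) :
    (A *ᵥ v) ⬝ᵥ u = (Aᵀ *ᵥ u) ⬝ᵥ v := by
  rw [Matrix.mulVec_transpose, dotProduct_comm, Matrix.dotProduct_mulVec]

lemma key_quad {p : Type*} [Fintype p] (A : Matrix p p ℝ) (hA : Aᵀ = A) (z z₀ c : p → ℝ)
    (h : A *ᵥ z₀ + c = 0) :
    (A *ᵥ z) ⬝ᵥ z + 2 * (c ⬝ᵥ z) =
      (A *ᵥ (z - z₀)) ⬝ᵥ (z - z₀) + ((A *ᵥ z₀) ⬝ᵥ z₀ + 2 * (c ⬝ᵥ z₀)) := by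
  have hc : c = -(A *ᵥ z₀) := eq_neg_of_add_eq_zero_right h
  subst hc
  have hadj : (A *ᵥ z) ⬝ᵥ z₀ = (A *ᵥ z₀) ⬝ᵥ z := by rw [adj_dot A z₀ z, hA]
  simp only [Matrix.mulVec_sub, sub_dotProduct, dotProduct_sub,
    neg_dotProduct]
  linarith

lemma isUnit_of_dot {p : Type*} [Fintype p] [DecidableEq p] (A : Matrix p p ℝ)
    (h : ∀ z, z ≠ 0 → (A *ᵥ z) ⬝ᵥ z ≠ 0) : IsUnit A := by
  rw [← Matrix.mulVec_injective_iff_isUnit]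
  intro z1 z2 hz
  by_contra hne
  apply h _ (sub_ne_zero.mpr hne)
  rw [Matrix.mulVec_sub, hz, sub_self, zero_dotProduct]

/-- The pointwise algebraic core of Theorem 4.4 of the paper: under
`R11` symmetric positive definite and `R22` symmetric negative definite,
the pair `(u*, v*)` is a saddle point of the quadratic functional `q`,
with saddle value `-⟨R⁻¹ w, w⟩`. -/
theorem quadratic_saddle_point
    {m k n : ℕ}
    (R11 : Matrix (Fin m) (Fin m) ℝ) (hR11sym : R11ᵀ = R11)
    (hR11pos : ∀ z : Fin m → ℝ, z ≠ 0 → 0 < (R11 *ᵥ z) ⬝ᵥ z)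
    (R22 : Matrix (Fin k) (Fin k) ℝ) (hR22sym : R22ᵀ = R22)
    (hR22neg : ∀ z : Fin k → ℝ, z ≠ 0 → (R22 *ᵥ z) ⬝ᵥ z < 0)
    (R12 : Matrix (Fin m) (Fin k) ℝ)
    (S1 : Matrix (Fin m) (Fin n) ℝ) (S2 : Matrix (Fin k) (Fin n) ℝ)
    (x : Fin n → ℝ) (a : Fin m → ℝ) (b : Fin k → ℝ)
    (q : (Fin m → ℝ) → (Fin k → ℝ) → ℝ)
    (hq : ∀ u v, q u v = (R11 *ᵥ u) ⬝ᵥ u + (R22 *ᵥ v) ⬝ᵥ v + 2 * ((R12 *ᵥ v) ⬝ᵥ u)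
        + 2 * ((S1 *ᵥ x + a) ⬝ᵥ u) + 2 * ((S2 *ᵥ x + b) ⬝ᵥ v))
    (ustar : Fin m → ℝ)
    (hustar : ustar = -((R11 - R12 * R22⁻¹ * R12ᵀ)⁻¹ *ᵥ
        ((S1 - R12 * R22⁻¹ * S2) *ᵥ x + a - (R12 * R22⁻¹) *ᵥ b)))
    (vstar : Fin k → ℝ)
    (hvstar : vstar = -(R22⁻¹ *ᵥ (R12ᵀ *ᵥ ustar + S2 *ᵥ x + b)))
    (w : Fin m ⊕ Fin k → ℝ)
    (hw : w = Sum.elim (S1 *ᵥ x + a) (S2 *ᵥ x + b)) :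
    (∀ u : Fin m → ℝ, ∀ v : Fin k → ℝ,
        q ustar v ≤ q ustar vstar ∧ q ustar vstar ≤ q u vstar) ∧
    q ustar vstar = -(((Matrix.fromBlocks R11 R12 R12ᵀ R22)⁻¹ *ᵥ w) ⬝ᵥ w) := by
  set c1 : Fin m → ℝ := S1 *ᵥ x + a with hc1
  set c2 : Fin k → ℝ := S2 *ᵥ x + b with hc2
  set Sg : Matrix (Fin m) (Fin m) ℝ := R11 - R12 * R22⁻¹ * R12ᵀ with hSgdef
  -- invertibility of R22
  have hR22u : IsUnit R22 := isUnit_of_dot _ (fun z hz => (hR22neg z hz).ne)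
  have hR22d : IsUnit R22.det := (Matrix.isUnit_iff_isUnit_det _).1 hR22u
  have hR22i : R22 * R22⁻¹ = 1 := Matrix.mul_nonsing_inv _ hR22d
  -- ⟨R22⁻¹ y, y⟩ ≤ 0
  have hre : ∀ y : Fin k → ℝ, (R22⁻¹ *ᵥ y) ⬝ᵥ y ≤ 0 := by
    intro y
    set t : Fin k → ℝ := R22⁻¹ *ᵥ y with ht
    have hy : y = R22 *ᵥ t := by rw [ht, Matrix.mulVec_mulVec, hR22i, Matrix.one_mulVec]
    rcases eq_or_ne t 0 with h0 | h0
    · rw [h0, zero_dotProduct]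
    · rw [hy, dotProduct_comm]
      exact (hR22neg t h0).le
  -- Sg positive definite
  have hSgpos : ∀ z : Fin m → ℝ, z ≠ 0 → 0 < (Sg *ᵥ z) ⬝ᵥ z := by
    intro z hz
    have hexp : (Sg *ᵥ z) ⬝ᵥ z
        = (R11 *ᵥ z) ⬝ᵥ z - (R22⁻¹ *ᵥ (R12ᵀ *ᵥ z)) ⬝ᵥ (R12ᵀ *ᵥ z) := by
      rw [hSgdef, Matrix.sub_mulVec, sub_dotProduct]
      congr 1
      rw [← Matrix.mulVec_mulVec, ← Matrix.mulVec_mulVec, adj_dot, dotProduct_comm]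
    rw [hexp]
    have := hre (R12ᵀ *ᵥ z)
    have := hR11pos z hz
    linarith
  have hSgu : IsUnit Sg := isUnit_of_dot _ (fun z hz => (hSgpos z hz).ne')
  have hSgd : IsUnit Sg.det := (Matrix.isUnit_iff_isUnit_det _).1 hSgu
  have hSgi : Sg * Sg⁻¹ = 1 := Matrix.mul_nonsing_inv _ hSgd
  -- first-order conditions
  have hgv : R22 *ᵥ vstar + (R12ᵀ *ᵥ ustar + c2) = 0 := by
    rw [hvstar, Matrix.mulVec_neg, Matrix.mulVec_mulVec, hR22i, Matrix.one_mulVec, hc2]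
    abel
  have hd : (S1 - R12 * R22⁻¹ * S2) *ᵥ x + a - (R12 * R22⁻¹) *ᵥ b
      = c1 - (R12 * R22⁻¹) *ᵥ c2 := by
    rw [hc1, hc2, Matrix.sub_mulVec, Matrix.mulVec_add, Matrix.mulVec_mulVec]
    abel
  have hSu : Sg *ᵥ ustar = -(c1 - (R12 * R22⁻¹) *ᵥ c2) := by
    rw [hustar, Matrix.mulVec_neg, Matrix.mulVec_mulVec, hSgi, Matrix.one_mulVec, hd]
  have hRv : R12 *ᵥ vstar = -((R12 * R22⁻¹ * R12ᵀ) *ᵥ ustar + (R12 * R22⁻¹) *ᵥ c2) := by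
    rw [hvstar, Matrix.mulVec_neg, Matrix.mulVec_mulVec]
    have : R12ᵀ *ᵥ ustar + S2 *ᵥ x + b = R12ᵀ *ᵥ ustar + c2 := by rw [hc2]; abel
    rw [this, Matrix.mulVec_add, Matrix.mulVec_mulVec]
  have hgu : R11 *ᵥ ustar + R12 *ᵥ vstar + c1 = 0 := by
    have h1 : R11 *ᵥ ustar = Sg *ᵥ ustar + (R12 * R22⁻¹ * R12ᵀ) *ᵥ ustar := by
      rw [hSgdef, Matrix.sub_mulVec]; abel
    rw [h1, hSu, hRv]
    abel
  -- quadratic expansions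
  have hub : ∀ u, q u vstar = (R11 *ᵥ (u - ustar)) ⬝ᵥ (u - ustar) + q ustar vstar := by
    intro u
    have hk := key_quad R11 hR11sym u ustar (R12 *ᵥ vstar + c1)
      (by rw [← add_assoc]; exact hgu)
    simp only [add_dotProduct] at hk
    rw [hq, hq]
    linarith
  have hvb : ∀ v, q ustar v = (R22 *ᵥ (v - vstar)) ⬝ᵥ (v - vstar) + q ustar vstar := by
    intro v
    have hk := key_quad R22 hR22sym v vstar (R12ᵀ *ᵥ ustar + c2) hgv
    simp only [add_dotProduct] at hk
    rw [hq, hq, adj_dot R12 ustar v, adj_dot R12 ustar vstar]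
    linarith
  constructor
  · intro u v
    constructor
    · rw [hvb v]
      have h0 : (R22 *ᵥ (v - vstar)) ⬝ᵥ (v - vstar) ≤ 0 := by
        rcases eq_or_ne (v - vstar) 0 with h | h
        · rw [h]; simp
        · exact (hR22neg _ h).le
      linarith
    · rw [hub u]
      have h0 : 0 ≤ (R11 *ᵥ (u - ustar)) ⬝ᵥ (u - ustar) := by
        rcases eq_or_ne (u - ustar) 0 with h | h
        · rw [h]; simp
        · exact (hR11pos _ h).le
      linarith
  -- saddle value
  · have hq0 : q ustar vstar = c1 ⬝ᵥ ustar + c2 ⬝ᵥ vstar := by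
      have e1 := congrArg (· ⬝ᵥ ustar) hgu
      have e2 := congrArg (· ⬝ᵥ vstar) hgv
      simp only [add_dotProduct, zero_dotProduct] at e1 e2
      have e3 : (R12 *ᵥ vstar) ⬝ᵥ ustar = (R12ᵀ *ᵥ ustar) ⬝ᵥ vstar := adj_dot _ _ _
      rw [hq]
      linarith
    -- invertibility of the block matrix
    haveI iR22 : Invertible R22 := hR22u.invertible
    haveI iSchur : Invertible (R11 - R12 * ⅟R22 * R12ᵀ) := by
      rw [Matrix.invOf_eq_nonsing_inv]
      exact hSgu.invertible
    haveI iR : Invertible (fromBlocks R11 R12 R12ᵀ R22) :=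
      Matrix.fromBlocks₂₂Invertible R11 R12 R12ᵀ R22
    have hRd : IsUnit (fromBlocks R11 R12 R12ᵀ R22).det :=
      (Matrix.isUnit_iff_isUnit_det _).1 (isUnit_of_invertible _)
    have hRim : (fromBlocks R11 R12 R12ᵀ R22)⁻¹ * fromBlocks R11 R12 R12ᵀ R22 = 1 :=
      Matrix.nonsing_inv_mul _ hRd
    have hz : (fromBlocks R11 R12 R12ᵀ R22) *ᵥ Sum.elim ustar vstar = -w := by
      rw [Matrix.fromBlocks_mulVec, hw]
      have e1 : R11 *ᵥ ustar + R12 *ᵥ vstar = -c1 := by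
        have := hgu; rw [add_eq_zero_iff_eq_neg] at this; exact this
      have e2 : R12ᵀ *ᵥ ustar + R22 *ᵥ vstar = -c2 := by
        have := hgv
        have h' : R22 *ᵥ vstar = -(R12ᵀ *ᵥ ustar + c2) := by
          rw [add_eq_zero_iff_eq_neg] at this; exact this
        rw [h']; abel
      simp only [Sum.elim_comp_inl, Sum.elim_comp_inr, e1, e2]
      funext i
      cases i <;> simp
    have hsol : (fromBlocks R11 R12 R12ᵀ R22)⁻¹ *ᵥ w = -(Sum.elim ustar vstar) := by
      have := congrArg (fun y => (fromBlocks R11 R12 R12ᵀ R22)⁻¹ *ᵥ y) hz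
      simp only [Matrix.mulVec_mulVec, hRim, Matrix.one_mulVec, Matrix.mulVec_neg] at this
      rw [this, neg_neg]
    rw [hq0, hsol, hw, neg_dotProduct, neg_neg, sumElim_dotProduct_sumElim,
      dotProduct_comm ustar c1, dotProduct_comm vstar c2]
end
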